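/- Let G be a non-cyclic finite abelian group with exp(G) = n. Then the set C_0(G) ∪ {η(G)} does not contain n+1 consecutive integers; that is, there is no integer t such that all of t, t+1, …, t+n belong to C_0(G) ∪ {η(G)}. -/

import Mathlib

/-!
Suppose `t, …, t + n` all lie in `C₀(G) ∪ {η(G)}`, so `t + n ≤ η(G)`. Take a sequence `W` of
length `t + n - 1 < η(G)` without short zero-sum subsequence and append the negative of its sum.
The resulting zero-sum sequence of length `t + n` has a short zero-sum subsequence, which must use
the new term; removing the rest of it from `W` leaves a zero-sum subsequence of `W` whose length
lies in `[t, t + n - 1] ⊆ C₀(G)`, so it has a short zero-sum subsequence after all.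
-/

/-- `S` contains a short zero-sum subsequence: a nonempty subsequence with sum `0`
whose length is at most `exp(G)`. -/
def HasShortZeroSumSubseq {G : Type*} [AddCommGroup G] (S : Multiset G) : Prop :=
  ∃ T, T ≤ S ∧ T.sum = 0 ∧ 1 ≤ Multiset.card T ∧ Multiset.card T ≤ AddMonoid.exponent G

/-- `η G` : the smallest `d` such that every sequence over `G` of length at least `d`
contains a short zero-sum subsequence. -/
noncomputable def etaConst (G : Type*) [AddCommGroup G] : ℕ :=
  sInf {d : ℕ | ∀ S : Multiset G, d ≤ Multiset.card S → HasShortZeroSumSubseq S}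

/-- `D G` : the Davenport constant, the smallest `d` such that every sequence over `G`
of length at least `d` contains a nonempty zero-sum subsequence. -/
noncomputable def davenport (G : Type*) [AddCommGroup G] : ℕ :=
  sInf {d : ℕ | ∀ S : Multiset G, d ≤ Multiset.card S → ∃ T, T ≤ S ∧ T ≠ 0 ∧ T.sum = 0}

/-- `C₀(G)` : the set of `t ∈ [D(G)+1, η(G)-1]` such that every zero-sum sequence over
`G` of length exactly `t` contains a short zero-sum subsequence. -/
def C0 (G : Type*) [AddCommGroup G] : Set ℕ :=
  {t | davenport G + 1 ≤ t ∧ t ≤ etaConst G - 1 ∧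
    ∀ S : Multiset G, Multiset.card S = t → S.sum = 0 → HasShortZeroSumSubseq S}

lemma Multiset.exists_le_card_eq {α : Type*} {s : Multiset α} {m : ℕ}
    (h : m ≤ Multiset.card s) : ∃ t ≤ s, Multiset.card t = m := by
  obtain ⟨t, ht⟩ := Multiset.card_pos_iff_exists_mem.1
    (by rw [Multiset.card_powersetCard]; exact Nat.choose_pos h)
  exact ⟨t, Multiset.mem_powersetCard.1 ht⟩

lemma Multiset.exists_lt_count_of_card_mul_lt {α : Type*} [Fintype α] [DecidableEq α]
    {s : Multiset α} {k : ℕ}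
    (h : Fintype.card α * k < Multiset.card s) : ∃ a, k < s.count a := by
  by_contra! hs
  have : Multiset.card s ≤ Fintype.card α * k := calc
    Multiset.card s = ∑ a, s.count a :=
      (Multiset.sum_count_eq_card fun a _ => Finset.mem_univ a).symm
    _ ≤ ∑ _a : α, k := Finset.sum_le_sum fun a _ => hs a
    _ = Fintype.card α * k := by simp
  omega

section ShortZeroSums

variable {G : Type*} [AddCommGroup G]

lemma HasShortZeroSumSubseq.mono {S S' : Multiset G} (h : HasShortZeroSumSubseq S)
    (hS : S ≤ S') : HasShortZeroSumSubseq S' := by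
  obtain ⟨T, hT, hT'⟩ := h
  exact ⟨T, hT.trans hS, hT'⟩

lemma hasShortZeroSumSubseq_of_exponent_le_count [DecidableEq G]
    (hexp : AddMonoid.exponent G ≠ 0) {S : Multiset G} {g : G}
    (hg : AddMonoid.exponent G ≤ S.count g) :
    HasShortZeroSumSubseq S := by
  have hdvd := AddMonoid.addOrder_dvd_exponent g
  have hord : addOrderOf g ≤ AddMonoid.exponent G := Nat.le_of_dvd (Nat.pos_of_ne_zero hexp) hdvd
  have hord_pos : 0 < addOrderOf g := Nat.pos_of_dvd_of_pos hdvd (Nat.pos_of_ne_zero hexp)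
  refine ⟨Multiset.replicate (addOrderOf g) g,
    Multiset.le_count_iff_replicate_le.1 (hord.trans hg), ?_, ?_, ?_⟩
  · rw [Multiset.sum_replicate, addOrderOf_nsmul_eq_zero]
  · rwa [Multiset.card_replicate]
  · rwa [Multiset.card_replicate]

lemma hasShortZeroSumSubseq_of_etaConst_le [Finite G] {S : Multiset G}
    (hS : etaConst G ≤ Multiset.card S) : HasShortZeroSumSubseq S := by
  classical
  have := Fintype.ofFinite G
  have hexp : AddMonoid.exponent G ≠ 0 := AddMonoid.exponent_ne_zero_of_finite
  refine Nat.sInf_mem (s := {d : ℕ | ∀ S : Multiset G, d ≤ Multiset.card S →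
    HasShortZeroSumSubseq S}) ⟨Fintype.card G * (AddMonoid.exponent G - 1) + 1,
      fun T hT => ?_⟩ S hS
  obtain ⟨g, hg⟩ := Multiset.exists_lt_count_of_card_mul_lt (k := AddMonoid.exponent G - 1)
    (s := T) (by omega)
  exact hasShortZeroSumSubseq_of_exponent_le_count hexp (g := g) (by omega)

lemma exists_card_eq_not_hasShortZeroSumSubseq_of_lt_etaConst {m : ℕ} (hm : m < etaConst G) :
    ∃ S : Multiset G, Multiset.card S = m ∧ ¬ HasShortZeroSumSubseq S := by
  obtain ⟨S, hS, hSshort⟩ : ∃ S : Multiset G, m ≤ Multiset.card S ∧ ¬ HasShortZeroSumSubseq S := by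
    simpa using Nat.notMem_of_lt_sInf hm
  obtain ⟨W, hWS, hW⟩ := Multiset.exists_le_card_eq hS
  exact ⟨W, hW, fun hWshort => hSshort (hWshort.mono hWS)⟩

lemma exists_zeroSum_le_of_hasShortZeroSumSubseq_cons_neg_sum {W : Multiset G}
    (hW : ¬ HasShortZeroSumSubseq W) (h : HasShortZeroSumSubseq (-W.sum ::ₘ W)) :
    ∃ V ≤ W, V.sum = 0 ∧ Multiset.card W < Multiset.card V + AddMonoid.exponent G := by
  classical
  obtain ⟨U, hUW, hU0, hU1, hUexp⟩ := h
  have hmem : -W.sum ∈ U := by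
    by_contra hnot
    exact hW ⟨U, (Multiset.le_cons_of_notMem hnot).1 hUW, hU0, hU1, hUexp⟩
  obtain ⟨U', rfl⟩ := Multiset.exists_cons_of_mem hmem
  have hU'W : U' ≤ W := (Multiset.cons_le_cons_iff _).1 hUW
  have hU'sum : U'.sum = W.sum := by
    rw [Multiset.sum_cons] at hU0
    exact (neg_add_eq_zero.1 hU0).symm
  refine ⟨W - U', tsub_le_self, ?_, ?_⟩
  · have hsplit : (W - U').sum + U'.sum = W.sum := by
      rw [← Multiset.sum_add, tsub_add_cancel_of_le hU'W]
    rw [hU'sum] at hsplit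
    exact add_eq_right.1 hsplit
  · rw [Multiset.card_sub hU'W]
    rw [Multiset.card_cons] at hUexp
    have := Multiset.card_le_card hU'W
    omega

lemma exists_zeroSum_not_hasShortZeroSumSubseq_of_lt_etaConst {m : ℕ} (hm : m < etaConst G)
    (hsucc : ∀ S : Multiset G, Multiset.card S = m + 1 → S.sum = 0 → HasShortZeroSumSubseq S) :
    ∃ V : Multiset G, V.sum = 0 ∧ ¬ HasShortZeroSumSubseq V ∧
      Multiset.card V ≤ m ∧ m < Multiset.card V + AddMonoid.exponent G := by
  obtain ⟨W, hWcard, hW⟩ := exists_card_eq_not_hasShortZeroSumSubseq_of_lt_etaConst hm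
  obtain ⟨V, hVW, hV0, hVcard⟩ := exists_zeroSum_le_of_hasShortZeroSumSubseq_cons_neg_sum hW
    (hsucc _ (by rw [Multiset.card_cons, hWcard]) (by rw [Multiset.sum_cons, neg_add_cancel]))
  refine ⟨V, hV0, fun hV => hW (hV.mono hVW), ?_, by omega⟩
  exact hWcard ▸ Multiset.card_le_card hVW

lemma hasShortZeroSumSubseq_of_mem_C0_union_etaConst [Finite G] {t : ℕ}
    (ht : t ∈ C0 G ∪ {etaConst G}) (S : Multiset G) (hS : Multiset.card S = t) (hS0 : S.sum = 0) :
    HasShortZeroSumSubseq S := by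
  rcases ht with hC0 | rfl
  · exact hC0.2.2 S hS hS0
  · exact hasShortZeroSumSubseq_of_etaConst_le hS.ge

end ShortZeroSums

theorem stmt_18_general (G : Type*) [AddCommGroup G] [Finite G]
    (n : ℕ) (hn : AddMonoid.exponent G = n) :
    ¬ ∃ t : ℕ, ∀ i ≤ n, t + i ∈ C0 G ∪ {etaConst G} := by
  rintro ⟨t, ht⟩
  have hn0 : n ≠ 0 := hn ▸ AddMonoid.exponent_ne_zero_of_finite
  have hlt : t + n - 1 < etaConst G := by
    rcases ht n le_rfl with hC0 | heta
    · have := hC0.2.1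
      omega
    · rw [Set.mem_singleton_iff] at heta
      omega
  have hC0 : ∀ i < n, t + i ∈ C0 G := fun i hi =>
    (ht i hi.le).resolve_right fun heta => by rw [Set.mem_singleton_iff] at heta; omega
  obtain ⟨V, hV0, hV, hVle, hVgt⟩ := exists_zeroSum_not_hasShortZeroSumSubseq_of_lt_etaConst hlt
    (by rw [Nat.sub_add_cancel (by omega)]
        exact hasShortZeroSumSubseq_of_mem_C0_union_etaConst (ht n le_rfl))
  rw [hn] at hVgt
  exact hV ((hC0 (Multiset.card V - t) (by omega)).2.2 V (by omega) hV0)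

theorem stmt_18 (G : Type*) [AddCommGroup G] [Finite G] (hG : ¬ IsAddCyclic G)
    (n : ℕ) (hn : AddMonoid.exponent G = n) :
    ¬ ∃ t : ℕ, ∀ i ≤ n, t + i ∈ C0 G ∪ {etaConst G} :=
  stmt_18_general G n hn
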